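/- Consider the open necklace with 12 beads of 3 types given in order by the type sequence (0,0,0,1,1,1,0,0,0,2,2,2) (three gray, three red, three gray, three green beads). This necklace does not admit a binary necklace splitting among k = 3 thieves of size 6: there do not exist integer cut points 0 = x_0 ≤ x_1 ≤ ⋯ ≤ x_6 ≤ x_7 = 12, an assignment a : Fin 7 → Fin 3 of the pieces to the thieves under which every thief receives exactly 2 beads of type 0, 1 bead of type 1, and 1 bead of type 2, and an injective map s : Fin 3 → (Fin 2 → Bool) such that whenever pieces j and j' are adjacent, the strings s(a(j)) and s(a(j')) differ in exactly one coordinate. -/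

import Mathlib

/-!
Let `o n` be the thief owning bead `n`. Three points of a Hamming cube are never pairwise at
distance one, since the three distances add up to an even number; so there is a thief `w` such
that whenever the owner changes between consecutive beads, one of the two owners is `w`.
The red beads `3, 4, 5` have three different owners, so bead `4` belongs to `w`, and likewise
bead `10`. Neither gray run `0, 1, 2` nor `6, 7, 8` has a single owner: the owner changes within
the first run, and some bead `k` of the second belongs to `w`, while beads `5` and `9` do not.
This gives seven changes of owner, within `0..2`, at `3` and `4`, within `5..k` and `k..9`, at
`9` and `10`; each starts a new piece, but a splitting into seven pieces has only six new starts.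
-/

open Finset

section Hamming

variable {ι : Type*} [Fintype ι]

lemma hammingDist_cast_zmod_two (u v : ι → Bool) :
    (hammingDist u v : ZMod 2) = ∑ i, ((u i).toNat : ZMod 2) + ∑ i, ((v i).toNat : ZMod 2) := by
  rw [hammingDist, card_filter, Nat.cast_sum, ← sum_add_distrib]
  refine sum_congr rfl fun i _ => ?_
  cases u i <;> cases v i <;> decide

lemma even_hammingDist_add_hammingDist_add_hammingDist (u v w : ι → Bool) :
    Even (hammingDist u v + hammingDist v w + hammingDist u w) := by
  rw [← ZMod.natCast_eq_zero_iff_even]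
  push_cast [hammingDist_cast_zmod_two]
  have two : (2 : ZMod 2) = 0 := rfl
  linear_combination (∑ i, ((u i).toNat : ZMod 2) + ∑ i, ((v i).toNat : ZMod 2) +
    ∑ i, ((w i).toNat : ZMod 2)) * two

lemma hammingDist_ne_one_of_hammingDist_eq_one {u v w : ι → Bool} (huv : hammingDist u v = 1)
    (hvw : hammingDist v w = 1) : hammingDist u w ≠ 1 := by
  intro huw
  have h := even_hammingDist_add_hammingDist_add_hammingDist u v w
  rw [huv, hvw, huw] at h
  exact absurd h (by decide)

lemma exists_forall_hammingDist_ne_one (s : Fin 3 → ι → Bool) :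
    ∃ w, ∀ u v, u ≠ v → u ≠ w → v ≠ w → hammingDist (s u) (s v) ≠ 1 := by
  have h : hammingDist (s 0) (s 1) ≠ 1 ∨ hammingDist (s 1) (s 2) ≠ 1 ∨
      hammingDist (s 0) (s 2) ≠ 1 := by
    by_contra! h
    exact hammingDist_ne_one_of_hammingDist_eq_one h.1 h.2.1 h.2.2
  rcases h with h | h | h
  · exact ⟨2, fun u v => by fin_cases u <;> fin_cases v <;> simp_all [hammingDist_comm (s 1)]⟩
  · exact ⟨0, fun u v => by fin_cases u <;> fin_cases v <;> simp_all [hammingDist_comm (s 2)]⟩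
  · exact ⟨1, fun u v => by fin_cases u <;> fin_cases v <;> simp_all [hammingDist_comm (s 2)]⟩

end Hamming

section Pieces

variable {m : ℕ} {x : Fin (m + 1) → ℕ}

def InPiece (x : Fin (m + 1) → ℕ) (j : Fin m) (n : ℕ) : Prop :=
  x j.castSucc ≤ n ∧ n < x j.succ

lemma exists_inPiece {n : ℕ} (h0 : x 0 ≤ n) (hn : n < x (Fin.last m)) : ∃ j, InPiece x j n := by
  induction m with
  | zero => exact absurd (h0.trans_lt hn) (lt_irrefl _)
  | succ m ih =>
    by_cases h : n < x (Fin.last m).castSucc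
    · obtain ⟨j, hj⟩ := ih (x := x ∘ Fin.castSucc) h0 h
      exact ⟨j.castSucc, hj⟩
    · exact ⟨Fin.last m, not_lt.1 h, hn⟩

lemma InPiece.nonempty {j : Fin m} {n : ℕ} (hj : InPiece x j n) : x j.castSucc < x j.succ :=
  hj.1.trans_lt hj.2

lemma InPiece.le (hx : Monotone x) {j j' : Fin m} {n n' : ℕ} (hj : InPiece x j n)
    (hj' : InPiece x j' n') (h : n ≤ n') : j ≤ j' := by
  by_contra! hlt
  have := hx (Fin.succ_le_castSucc_iff.2 hlt)
  have := hj.1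
  have := hj'.2
  omega

lemma InPiece.eq_between (hx : Monotone x) {j j' i : Fin m} {n : ℕ} (hj : InPiece x j n)
    (hj' : InPiece x j' (n + 1)) (hi : j < i) (hi' : i < j') : x i.castSucc = x i.succ := by
  have := hx (Fin.succ_le_castSucc_iff.2 hi)
  have := hx (Fin.succ_le_castSucc_iff.2 hi')
  have := hx (Fin.castSucc_le_succ i)
  have := hj.2
  have := hj'.1
  omega

end Pieces

section Owners

variable {α β γ : Type*} [Fintype α] [DecidableEq β] [DecidableEq γ] {col : α → β} {o : α → γ}
  {c : β}

lemma ne_of_card_filter_le_one (h : ∀ t, #{n | col n = c ∧ o n = t} ≤ 1) {n₁ n₂ : α}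
    (h₁ : col n₁ = c) (h₂ : col n₂ = c) (h₁₂ : n₁ ≠ n₂) : o n₁ ≠ o n₂ := fun e =>
  h₁₂ (card_le_one.1 (h (o n₁)) n₁ (by simp [h₁]) n₂ (by simp [h₂, e]))

lemma not_eq_and_eq_of_card_filter_le_two (h : ∀ t, #{n | col n = c ∧ o n = t} ≤ 2)
    {n₁ n₂ n₃ : α} (h₁ : col n₁ = c) (h₂ : col n₂ = c) (h₃ : col n₃ = c) (h₁₂ : n₁ ≠ n₂)
    (h₁₃ : n₁ ≠ n₃) (h₂₃ : n₂ ≠ n₃) : ¬ (o n₁ = o n₂ ∧ o n₂ = o n₃) := fun ⟨e₁, e₂⟩ =>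
  (h (o n₁)).not_gt <| two_lt_card.2
    ⟨n₁, by simp [h₁], n₂, by simp [h₂, e₁], n₃, by simp [h₃, e₁, e₂], h₁₂, h₁₃, h₂₃⟩

end Owners

section Changes

variable {N : ℕ} {α : Type*}

def ChangesThrough (o : Fin N → α) (w : α) : Prop :=
  ∀ n n' : Fin N, (n' : ℕ) = n + 1 → o n ≠ o n' → o n = w ∨ o n' = w

variable {o : Fin N → α} {w : α} {n₁ n₂ n₃ : Fin N}

lemma ChangesThrough.eq_of_ne (ho : ChangesThrough o w) (h₁₂ : (n₂ : ℕ) = n₁ + 1)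
    (h₂₃ : (n₃ : ℕ) = n₂ + 1) (h₁₂' : o n₁ ≠ o n₂) (h₂₃' : o n₂ ≠ o n₃) (h₁₃' : o n₁ ≠ o n₃) :
    o n₂ = w := by
  have := ho _ _ h₁₂ h₁₂'
  have := ho _ _ h₂₃ h₂₃'
  grind

lemma ChangesThrough.exists_eq (ho : ChangesThrough o w) (h₁₂ : (n₂ : ℕ) = n₁ + 1)
    (h₂₃ : (n₃ : ℕ) = n₂ + 1) (h : ¬ (o n₁ = o n₂ ∧ o n₂ = o n₃)) :
    ∃ n, n₁ ≤ n ∧ n ≤ n₃ ∧ o n = w := by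
  simp only [Fin.le_iff_val_le_val]
  rcases not_and_or.1 h with h | h
  · rcases ho _ _ h₁₂ h with h' | h'
    exacts [⟨n₁, by omega, by omega, h'⟩, ⟨n₂, by omega, by omega, h'⟩]
  · rcases ho _ _ h₂₃ h with h' | h'
    exacts [⟨n₂, by omega, by omega, h'⟩, ⟨n₃, by omega, by omega, h'⟩]

lemma changesThrough_of_inPiece {m : ℕ} {x : Fin (m + 1) → ℕ} (hx : Monotone x)
    {p : Fin N → Fin m} (hp : ∀ n, InPiece x (p n) n) {ι : Type*} [Fintype ι] {a : Fin m → α}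
    {s : α → ι → Bool}
    (hadj : ∀ j j' : Fin m, j < j' → x j.castSucc < x j.succ → x j'.castSucc < x j'.succ →
      (∀ i, j < i → i < j' → x i.castSucc = x i.succ) → hammingDist (s (a j)) (s (a j')) = 1)
    (hw : ∀ u v, u ≠ v → u ≠ w → v ≠ w → hammingDist (s u) (s v) ≠ 1) :
    ChangesThrough (fun n => a (p n)) w := by
  intro n n' hn' hne
  have hlt : p n < p n' :=
    ((hp n).le hx (hp n') (by omega)).lt_of_ne fun e => hne (congrArg a e)
  have hp' : InPiece x (p n') (n + 1) := hn' ▸ hp n'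
  by_contra! h
  exact hw _ _ hne h.1 h.2 <| hadj _ _ hlt (hp n).nonempty (hp n').nonempty
    fun i => (hp n).eq_between hx hp'

end Changes

def necklace : Fin 12 → Fin 3 := ![0, 0, 0, 1, 1, 1, 0, 0, 0, 2, 2, 2]

theorem false_of_necklace_owners {p : Fin 12 → Fin 7} (hp : Monotone p) {o : Fin 12 → Fin 3}
    (hop : ∀ n n', p n = p n' → o n = o n') {w : Fin 3} (ho : ChangesThrough o w)
    (hgray : ∀ t, #{n | necklace n = 0 ∧ o n = t} ≤ 2)
    (hred : ∀ t, #{n | necklace n = 1 ∧ o n = t} ≤ 1)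
    (hgreen : ∀ t, #{n | necklace n = 2 ∧ o n = t} ≤ 1) : False := by
  have lt_of_ne {n n' : Fin 12} (h : n ≤ n') (hne : o n ≠ o n') : p n < p n' :=
    (hp h).lt_of_ne fun e => hne (hop n n' e)
  have red : o 3 ≠ o 4 ∧ o 4 ≠ o 5 ∧ o 3 ≠ o 5 :=
    ⟨ne_of_card_filter_le_one hred rfl rfl (by decide),
      ne_of_card_filter_le_one hred rfl rfl (by decide),
      ne_of_card_filter_le_one hred rfl rfl (by decide)⟩
  have green : o 9 ≠ o 10 ∧ o 10 ≠ o 11 ∧ o 9 ≠ o 11 :=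
    ⟨ne_of_card_filter_le_one hgreen rfl rfl (by decide),
      ne_of_card_filter_le_one hgreen rfl rfl (by decide),
      ne_of_card_filter_le_one hgreen rfl rfl (by decide)⟩
  have h4 : o 4 = w := ho.eq_of_ne rfl rfl red.1 red.2.1 red.2.2
  have h10 : o 10 = w := ho.eq_of_ne rfl rfl green.1 green.2.1 green.2.2
  have gray {n₁ n₂ n₃ : Fin 12} (h₁ : necklace n₁ = 0) (h₂ : necklace n₂ = 0)
      (h₃ : necklace n₃ = 0) (h₁₂ : n₁ < n₂) (h₂₃ : n₂ < n₃) : ¬ (o n₁ = o n₂ ∧ o n₂ = o n₃) :=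
    not_eq_and_eq_of_card_filter_le_two hgray h₁ h₂ h₃ h₁₂.ne (h₁₂.trans h₂₃).ne h₂₃.ne
  have h02 : p 0 < p 2 := by
    rcases not_and_or.1 (gray (n₁ := 0) (n₂ := 1) (n₃ := 2) rfl rfl rfl (by decide) (by decide))
      with h | h
    · exact (lt_of_ne (by decide) h).trans_le (hp (by decide))
    · exact (hp (by decide)).trans_lt (lt_of_ne (by decide) h)
  obtain ⟨k, hk6, hk8, hk⟩ := ho.exists_eq (n₁ := 6) (n₂ := 7) (n₃ := 8) rfl rfl
    (gray rfl rfl rfl (by decide) (by decide))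
  have := hp (show (2 : Fin 12) ≤ 3 by decide)
  have := lt_of_ne (by decide) red.1
  have := lt_of_ne (by decide) red.2.1
  have := lt_of_ne (show 5 ≤ k by omega) (by rw [hk, ← h4]; exact red.2.1.symm)
  have := lt_of_ne (show k ≤ 9 by omega) (by rw [hk, ← h10]; exact green.1.symm)
  have := lt_of_ne (by decide) green.1
  have := lt_of_ne (by decide) green.2.1
  omega

theorem stmt8 :
    ¬ ∃ (x : Fin 8 → ℕ) (a : Fin 7 → Fin 3) (s : Fin 3 → Fin 2 → Bool),
      Monotone x ∧ x 0 = 0 ∧ x 7 = 12 ∧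
      Function.Injective s ∧
      -- each thief receives exactly 2 beads of type 0, 1 of type 1 and 1 of type 2
      (∀ th : Fin 3,
        (Finset.univ.filter (fun n : Fin 12 =>
            (![0, 0, 0, 1, 1, 1, 0, 0, 0, 2, 2, 2] : Fin 12 → Fin 3) n = 0 ∧
            ∃ j : Fin 7, a j = th ∧
              x j.castSucc ≤ (n : ℕ) ∧ (n : ℕ) < x j.succ)).card = 2 ∧
        (Finset.univ.filter (fun n : Fin 12 =>
            (![0, 0, 0, 1, 1, 1, 0, 0, 0, 2, 2, 2] : Fin 12 → Fin 3) n = 1 ∧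
            ∃ j : Fin 7, a j = th ∧
              x j.castSucc ≤ (n : ℕ) ∧ (n : ℕ) < x j.succ)).card = 1 ∧
        (Finset.univ.filter (fun n : Fin 12 =>
            (![0, 0, 0, 1, 1, 1, 0, 0, 0, 2, 2, 2] : Fin 12 → Fin 3) n = 2 ∧
            ∃ j : Fin 7, a j = th ∧
              x j.castSucc ≤ (n : ℕ) ∧ (n : ℕ) < x j.succ)).card = 1) ∧
      -- adjacent pieces go to thieves whose binary strings differ in exactly one bit
      (∀ j j' : Fin 7, j < j' →
        x j.castSucc < x j.succ → x j'.castSucc < x j'.succ →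
        (∀ i : Fin 7, j < i → i < j' → x i.castSucc = x i.succ) →
        (Finset.univ.filter (fun i => s (a j) i ≠ s (a j') i)).card = 1) := by
  rintro ⟨x, a, s, hx, hx0, hx7, -, hcount, hadj⟩
  choose p hp using fun n : Fin 12 =>
    exists_inPiece (x := x) (hx0.trans_le n.val.zero_le) (hx7.symm ▸ n.isLt)
  have hcard (c th : Fin 3) : #{n | necklace n = c ∧ a (p n) = th} ≤
      #{n : Fin 12 | necklace n = c ∧ ∃ j, a j = th ∧ x j.castSucc ≤ n ∧ n < x j.succ} :=
    card_le_card <| monotone_filter_right _ fun n _ hn => ⟨hn.1, p n, hn.2, hp n⟩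
  obtain ⟨w, hw⟩ := exists_forall_hammingDist_ne_one s
  exact false_of_necklace_owners (fun n n' h => (hp n).le hx (hp n') h) (fun _ _ => congrArg a)
    (changesThrough_of_inPiece hx hp hadj hw)
    (fun th => (hcard 0 th).trans (hcount th).1.le)
    (fun th => (hcard 1 th).trans (hcount th).2.1.le)
    (fun th => (hcard 2 th).trans (hcount th).2.2.le)
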